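/- arXiv:1512.06758 — 7 statements merged into one kernel-verified Lean document; each statement's English description precedes it below -/
import Mathlib

section
/- Let ε, α, β, ω ∈ ℝ and let x, y : ℝ → ℝ be twice differentiable. Then for all t ∈ ℝ the following two identities hold: (d/dt)[ẋ − (ε/2)(x − βxy² − αx³/3)] − [−ω²x + (ε/2)(1 − αx² − βy²)ẋ + εβxyẏ] = ẍ + ε(αx² + βy² − 1)ẋ + ω²x, and (d/dt)[ẏ + (ε/2)(y − αyx² − βy³/3)] − [−ω²y − εαxyẋ − (ε/2)(1 − αx² − βy²)ẏ] = ÿ − ε(αx² + βy² − 1)ẏ + ω²y. In particular, x and y satisfy the Euler–Lagrange equations of the Lagrangian L if and only if ẍ + ε(αx² + βy² − 1)ẋ + ω²x = 0 and ÿ − ε(αx² + βy² − 1)ẏ + ω²y = 0. -/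
theorem hasDerivAt_sub_mul_sq_sub_cube_div_three {u v : ℝ → ℝ} {u' v' t : ℝ} (a b : ℝ)
    (hu : HasDerivAt u u' t) (hv : HasDerivAt v v' t) :
    HasDerivAt (fun s => u s - a * u s * v s ^ 2 - b * u s ^ 3 / 3)
      ((1 - b * u t ^ 2 - a * v t ^ 2) * u' - 2 * a * u t * v t * v') t := by
  refine ((hu.fun_sub ((hu.const_mul a).fun_mul (hv.fun_pow 2))).fun_sub
    (((hu.fun_pow 3).const_mul b).div_const 3)).congr_deriv ?_
  push_cast
  ring

theorem euler_lagrange_x_eq_vdp (ε α β ω : ℝ) {x y : ℝ → ℝ} {t : ℝ}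
    (hx : DifferentiableAt ℝ x t) (hx' : DifferentiableAt ℝ (deriv x) t)
    (hy : DifferentiableAt ℝ y t) :
    deriv (fun s => deriv x s
        - ε / 2 * (x s - β * x s * (y s) ^ 2 - α * (x s) ^ 3 / 3)) t
      - (-ω ^ 2 * x t + ε / 2 * (1 - α * (x t) ^ 2 - β * (y t) ^ 2) * deriv x t
          + ε * β * x t * y t * deriv y t)
    = deriv (deriv x) t + ε * (α * (x t) ^ 2 + β * (y t) ^ 2 - 1) * deriv x t
        + ω ^ 2 * x t := by
  rw [(hx'.hasDerivAt.fun_sub <| (hasDerivAt_sub_mul_sq_sub_cube_div_three β α hx.hasDerivAt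
    hy.hasDerivAt).const_mul (ε / 2)).deriv]
  ring

theorem euler_lagrange_y_eq_vdp (ε α β ω : ℝ) {x y : ℝ → ℝ} {t : ℝ}
    (hx : DifferentiableAt ℝ x t) (hy : DifferentiableAt ℝ y t)
    (hy' : DifferentiableAt ℝ (deriv y) t) :
    deriv (fun s => deriv y s
        + ε / 2 * (y s - α * y s * (x s) ^ 2 - β * (y s) ^ 3 / 3)) t
      - (-ω ^ 2 * y t - ε * α * x t * y t * deriv x t
          - ε / 2 * (1 - α * (x t) ^ 2 - β * (y t) ^ 2) * deriv y t)
    = deriv (deriv y) t - ε * (α * (x t) ^ 2 + β * (y t) ^ 2 - 1) * deriv y t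
        + ω ^ 2 * y t := by
  rw [(hy'.hasDerivAt.fun_add <| (hasDerivAt_sub_mul_sq_sub_cube_div_three α β hy.hasDerivAt
    hx.hasDerivAt).const_mul (ε / 2)).deriv]
  ring

theorem euler_lagrange_identity_symmetric_vdp
    (ε α β ω : ℝ) (x y : ℝ → ℝ)
    (hx : Differentiable ℝ x) (hx' : Differentiable ℝ (deriv x))
    (hy : Differentiable ℝ y) (hy' : Differentiable ℝ (deriv y)) :
    (∀ t : ℝ,
      deriv (fun s => deriv x s
          - ε / 2 * (x s - β * x s * (y s) ^ 2 - α * (x s) ^ 3 / 3)) t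
        - (-ω ^ 2 * x t + ε / 2 * (1 - α * (x t) ^ 2 - β * (y t) ^ 2) * deriv x t
            + ε * β * x t * y t * deriv y t)
      = deriv (deriv x) t + ε * (α * (x t) ^ 2 + β * (y t) ^ 2 - 1) * deriv x t
          + ω ^ 2 * x t) ∧
    (∀ t : ℝ,
      deriv (fun s => deriv y s
          + ε / 2 * (y s - α * y s * (x s) ^ 2 - β * (y s) ^ 3 / 3)) t
        - (-ω ^ 2 * y t - ε * α * x t * y t * deriv x t
            - ε / 2 * (1 - α * (x t) ^ 2 - β * (y t) ^ 2) * deriv y t)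
      = deriv (deriv y) t - ε * (α * (x t) ^ 2 + β * (y t) ^ 2 - 1) * deriv y t
          + ω ^ 2 * y t) ∧
    (((∀ t : ℝ,
        deriv (fun s => deriv x s
            - ε / 2 * (x s - β * x s * (y s) ^ 2 - α * (x s) ^ 3 / 3)) t
          - (-ω ^ 2 * x t + ε / 2 * (1 - α * (x t) ^ 2 - β * (y t) ^ 2) * deriv x t
              + ε * β * x t * y t * deriv y t) = 0) ∧
      (∀ t : ℝ,
        deriv (fun s => deriv y s
            + ε / 2 * (y s - α * y s * (x s) ^ 2 - β * (y s) ^ 3 / 3)) t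
          - (-ω ^ 2 * y t - ε * α * x t * y t * deriv x t
              - ε / 2 * (1 - α * (x t) ^ 2 - β * (y t) ^ 2) * deriv y t) = 0))
      ↔
      ((∀ t : ℝ, deriv (deriv x) t
          + ε * (α * (x t) ^ 2 + β * (y t) ^ 2 - 1) * deriv x t + ω ^ 2 * x t = 0) ∧
       (∀ t : ℝ, deriv (deriv y) t
          - ε * (α * (x t) ^ 2 + β * (y t) ^ 2 - 1) * deriv y t + ω ^ 2 * y t = 0))) := by
  have el_x := fun t => euler_lagrange_x_eq_vdp ε α β ω (hx t) (hx' t) (hy t)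
  have el_y := fun t => euler_lagrange_y_eq_vdp ε α β ω (hx t) (hy t) (hy' t)
  exact ⟨el_x, el_y, by simp only [el_x, el_y]⟩
end

section
/- Let ε, α, β, ω ∈ ℝ and let x, y : ℝ → ℝ be twice differentiable functions satisfying ẍ(t) + ε(αx(t)² + βy(t)² − 1)ẋ(t) + ω²x(t) = 0 and ÿ(t) − ε(αx(t)² + βy(t)² − 1)ẏ(t) + ω²y(t) = 0 for all t ∈ ℝ. Then the function t ↦ ẋ(t)·ẏ(t) + ω²·x(t)·y(t) is constant on ℝ. -/
/-!
Writing `g = ε (α x² + β y² - 1)`, the derivative of `ẋ ẏ + ω² x y` is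
`ẏ (ẍ + ω² x) + ẋ (ÿ + ω² y) = ẏ (-g ẋ) + ẋ (g ẏ) = 0`: the damping of `x` and the
anti-damping of `y` cancel, whatever the function `g` is.
-/

theorem hasDerivAt_deriv_mul_deriv_add_mul {x y : ℝ → ℝ} {t : ℝ} (ω : ℝ)
    (hx : DifferentiableAt ℝ x t) (hx' : DifferentiableAt ℝ (deriv x) t)
    (hy : DifferentiableAt ℝ y t) (hy' : DifferentiableAt ℝ (deriv y) t) :
    HasDerivAt (fun s => deriv x s * deriv y s + ω ^ 2 * x s * y s)
      (deriv y t * (deriv (deriv x) t + ω ^ 2 * x t)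
        + deriv x t * (deriv (deriv y) t + ω ^ 2 * y t)) t := by
  have h := (hx'.hasDerivAt.mul hy'.hasDerivAt).add
    ((hx.hasDerivAt.const_mul (ω ^ 2)).mul hy.hasDerivAt)
  exact h.congr_deriv (by ring)

theorem exists_deriv_mul_deriv_add_mul_eq_of_antidamped {x y : ℝ → ℝ} (g : ℝ → ℝ) (ω : ℝ)
    (hx : Differentiable ℝ x) (hx' : Differentiable ℝ (deriv x))
    (hy : Differentiable ℝ y) (hy' : Differentiable ℝ (deriv y))
    (hxeq : ∀ t, deriv (deriv x) t + g t * deriv x t + ω ^ 2 * x t = 0)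
    (hyeq : ∀ t, deriv (deriv y) t - g t * deriv y t + ω ^ 2 * y t = 0) :
    ∃ c : ℝ, ∀ t : ℝ, deriv x t * deriv y t + ω ^ 2 * x t * y t = c := by
  have hF t := hasDerivAt_deriv_mul_deriv_add_mul ω (hx t) (hx' t) (hy t) (hy' t)
  have hF' t : deriv (fun s => deriv x s * deriv y s + ω ^ 2 * x s * y s) t = 0 := by
    rw [(hF t).deriv]
    linear_combination deriv y t * hxeq t + deriv x t * hyeq t
  exact ⟨_, fun t => is_const_of_deriv_eq_zero (fun t => (hF t).differentiableAt) hF' t 0⟩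

theorem symmetric_vdp_first_integral
    (ε α β ω : ℝ) (x y : ℝ → ℝ)
    (hx : Differentiable ℝ x) (hx' : Differentiable ℝ (deriv x))
    (hy : Differentiable ℝ y) (hy' : Differentiable ℝ (deriv y))
    (hxeq : ∀ t : ℝ, deriv (deriv x) t
      + ε * (α * (x t) ^ 2 + β * (y t) ^ 2 - 1) * deriv x t + ω ^ 2 * x t = 0)
    (hyeq : ∀ t : ℝ, deriv (deriv y) t
      - ε * (α * (x t) ^ 2 + β * (y t) ^ 2 - 1) * deriv y t + ω ^ 2 * y t = 0) :
    ∃ c : ℝ, ∀ t : ℝ, deriv x t * deriv y t + ω ^ 2 * x t * y t = c :=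
  exists_deriv_mul_deriv_add_mul_eq_of_antidamped
    (fun t => ε * (α * (x t) ^ 2 + β * (y t) ^ 2 - 1)) ω hx hx' hy hy' hxeq hyeq
end

section
/- Let ε, α, ω ∈ ℝ and let x, y, pₓ, p_y : ℝ → ℝ be differentiable functions satisfying Hamilton's equations of H_v: ẋ = p_y + (ε/2)x − (αε/6)x³, ẏ = pₓ − (ε/2)y + (αε/2)x²y, ṗₓ = −(ε/2)pₓ − (ω² − ε²/4)y − (αε/2)(2xy·p_y − x²pₓ) − (αε²/12)(12x²y − 5αx⁴y), ṗ_y = (ε/2)p_y − (ω² − ε²/4)x − (αε/2)x²p_y − (αε²/12)(4x³ − αx⁵), for all t ∈ ℝ. Then x and y are twice differentiable and satisfy the Van der Pol equation ẍ + ε(αx² − 1)ẋ + ω²x = 0 and the auxiliary Van der Pol equation ÿ − ε(αx² − 1)ẏ + ω²y = 0 for all t ∈ ℝ. -/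
/-!
The momenta can be eliminated: the equations for `ẋ` and `ẏ` express `p_y` and `pₓ` through
`x, ẋ` and `x, y, ẏ`. Differentiating them once more and substituting the equations for `ṗ_y`
and `ṗₓ` leaves a polynomial identity, which is the Van der Pol equation and its auxiliary partner.
-/

theorem hasDerivAt_deriv_of_deriv_eq {f g : ℝ → ℝ} {g' t : ℝ}
    (hfg : ∀ s, deriv f s = g s) (hg : HasDerivAt g g' t) : HasDerivAt (deriv f) g' t :=
  funext hfg ▸ hg

section VanDerPol

variable {ε α t : ℝ} {x y px py : ℝ → ℝ}

theorem hasDerivAt_vdp_velocity_x (hx : DifferentiableAt ℝ x t) (hpy : DifferentiableAt ℝ py t) :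
    HasDerivAt (fun s => py s + ε / 2 * x s - α * ε / 6 * (x s) ^ 3)
      (deriv py t + (ε / 2 - α * ε / 2 * (x t) ^ 2) * deriv x t) t := by
  refine ((hpy.hasDerivAt.add (hx.hasDerivAt.const_mul (ε / 2))).sub
    ((hx.hasDerivAt.fun_pow 3).const_mul (α * ε / 6))).congr_deriv ?_
  push_cast
  ring

theorem hasDerivAt_vdp_velocity_y (hx : DifferentiableAt ℝ x t) (hy : DifferentiableAt ℝ y t)
    (hpx : DifferentiableAt ℝ px t) :
    HasDerivAt (fun s => px s - ε / 2 * y s + α * ε / 2 * (x s) ^ 2 * y s)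
      (deriv px t + (α * ε / 2 * (x t) ^ 2 - ε / 2) * deriv y t
        + α * ε * x t * y t * deriv x t) t := by
  refine ((hpx.hasDerivAt.sub (hy.hasDerivAt.const_mul (ε / 2))).add
    (((hx.hasDerivAt.fun_pow 2).const_mul (α * ε / 2)).mul hy.hasDerivAt)).congr_deriv ?_
  push_cast
  ring

end VanDerPol

theorem vdp_hamilton_equations_give_vdp
    (ε α ω : ℝ) (x y px py : ℝ → ℝ)
    (hx : Differentiable ℝ x) (hy : Differentiable ℝ y)
    (hpx : Differentiable ℝ px) (hpy : Differentiable ℝ py)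
    (h1 : ∀ t : ℝ, deriv x t = py t + ε / 2 * x t - α * ε / 6 * (x t) ^ 3)
    (h2 : ∀ t : ℝ, deriv y t = px t - ε / 2 * y t + α * ε / 2 * (x t) ^ 2 * y t)
    (h3 : ∀ t : ℝ, deriv px t = -(ε / 2) * px t - (ω ^ 2 - ε ^ 2 / 4) * y t
      - α * ε / 2 * (2 * x t * y t * py t - (x t) ^ 2 * px t)
      - α * ε ^ 2 / 12 * (12 * (x t) ^ 2 * y t - 5 * α * (x t) ^ 4 * y t))
    (h4 : ∀ t : ℝ, deriv py t = ε / 2 * py t - (ω ^ 2 - ε ^ 2 / 4) * x t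
      - α * ε / 2 * (x t) ^ 2 * py t
      - α * ε ^ 2 / 12 * (4 * (x t) ^ 3 - α * (x t) ^ 5)) :
    (Differentiable ℝ (deriv x) ∧ Differentiable ℝ (deriv y)) ∧
    (∀ t : ℝ, deriv (deriv x) t + ε * (α * (x t) ^ 2 - 1) * deriv x t
      + ω ^ 2 * x t = 0) ∧
    (∀ t : ℝ, deriv (deriv y) t - ε * (α * (x t) ^ 2 - 1) * deriv y t
      + ω ^ 2 * y t = 0) := by
  have hx' (t : ℝ) := hasDerivAt_deriv_of_deriv_eq h1
    (hasDerivAt_vdp_velocity_x (α := α) (hx t) (hpy t))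
  have hy' (t : ℝ) := hasDerivAt_deriv_of_deriv_eq h2
    (hasDerivAt_vdp_velocity_y (ε := ε) (α := α) (hx t) (hy t) (hpx t))
  refine ⟨⟨fun t => (hx' t).differentiableAt, fun t => (hy' t).differentiableAt⟩,
    fun t => ?_, fun t => ?_⟩
  · rw [(hx' t).deriv, h4 t, h1 t]
    ring
  · rw [(hy' t).deriv, h3 t, h2 t, h1 t]
    ring
end

section
/- Let ε, ω ∈ ℝ, let f : ℝ → ℝ be any function, and let x, y : ℝ → ℝ be twice differentiable functions satisfying the Liénard equation ẍ(t) + εf(x(t))ẋ(t) + ω²x(t) = 0 and the auxiliary equation ÿ(t) − εf(x(t))ẏ(t) + ω²y(t) = 0 for all t ∈ ℝ. Then the function t ↦ ẋ(t)·ẏ(t) + ω²·x(t)·y(t) is constant on ℝ. -/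
/-! The equation `ÿ - g ẏ + k y = 0` is the formal adjoint of `ẍ + g ẋ + k x = 0`, so the bilinear
concomitant `ẋ ẏ + k x y` of a solution pair is conserved: differentiating it and substituting the two
equations, the damping terms `∓ g ẋ ẏ` cancel and the restoring terms `-k (x ẏ + ẋ y)` cancel against
the derivative of `k x y`. -/

section AdjointPair

variable {u v : ℝ → ℝ}

theorem hasDerivAt_deriv_mul_deriv_add_const_mul_mul (k : ℝ)
    (hu : Differentiable ℝ u) (hu' : Differentiable ℝ (deriv u))
    (hv : Differentiable ℝ v) (hv' : Differentiable ℝ (deriv v)) (t : ℝ) :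
    HasDerivAt (fun s => deriv u s * deriv v s + k * u s * v s)
      (deriv (deriv u) t * deriv v t + deriv u t * deriv (deriv v) t
        + k * (deriv u t * v t + u t * deriv v t)) t := by
  have h := ((hu' t).hasDerivAt.mul (hv' t).hasDerivAt).add
    (((hu t).hasDerivAt.const_mul k).mul (hv t).hasDerivAt)
  exact h.congr_deriv (by ring)

theorem exists_const_deriv_mul_deriv_add_const_mul_mul_of_adjoint (g : ℝ → ℝ) (k : ℝ)
    (hu : Differentiable ℝ u) (hu' : Differentiable ℝ (deriv u))
    (hv : Differentiable ℝ v) (hv' : Differentiable ℝ (deriv v))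
    (hueq : ∀ t, deriv (deriv u) t + g t * deriv u t + k * u t = 0)
    (hveq : ∀ t, deriv (deriv v) t - g t * deriv v t + k * v t = 0) :
    ∃ c : ℝ, ∀ t, deriv u t * deriv v t + k * u t * v t = c := by
  have hF := hasDerivAt_deriv_mul_deriv_add_const_mul_mul k hu hu' hv hv'
  have hF_deriv_zero : ∀ t, deriv (fun s => deriv u s * deriv v s + k * u s * v s) t = 0 := by
    intro t
    rw [(hF t).deriv]
    linear_combination deriv v t * hueq t + deriv u t * hveq t
  exact ⟨_, fun t => is_const_of_deriv_eq_zero (fun t => (hF t).differentiableAt)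
    hF_deriv_zero t 0⟩

end AdjointPair

theorem lienard_first_integral
    (ε ω : ℝ) (f : ℝ → ℝ) (x y : ℝ → ℝ)
    (hx : Differentiable ℝ x) (hx' : Differentiable ℝ (deriv x))
    (hy : Differentiable ℝ y) (hy' : Differentiable ℝ (deriv y))
    (hxeq : ∀ t : ℝ, deriv (deriv x) t + ε * f (x t) * deriv x t + ω ^ 2 * x t = 0)
    (hyeq : ∀ t : ℝ, deriv (deriv y) t - ε * f (x t) * deriv y t + ω ^ 2 * y t = 0) :
    ∃ c : ℝ, ∀ t : ℝ, deriv x t * deriv y t + ω ^ 2 * x t * y t = c :=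
  exists_const_deriv_mul_deriv_add_const_mul_mul_of_adjoint (fun t => ε * f (x t)) (ω ^ 2)
    hx hx' hy hy' hxeq hyeq
end

section
/- Let ε, α, A, ω ∈ ℝ and let x, y, pₓ, p_y : ℝ → ℝ be differentiable functions satisfying Hamilton's equations of H_{2v}: ẋ = p_y + (ε/2)x, ẏ = pₓ − (ε/2)(1 − αA²/2)y, ṗₓ = −(ε/2)pₓ − (ω² − ε²/4)y, ṗ_y = (ε/2)(1 − αA²/2)p_y − (ω² − ε²/4)x, for all t ∈ ℝ. Then x and y are twice differentiable and satisfy exactly the linear equations ẍ + ε(αA²/4 − 1)ẋ + (ω² − ε²αA²/8)x = 0 and ÿ − ε(αA²/4 − 1)ẏ + (ω² − ε²αA²/8)y = 0 for all t ∈ ℝ. -/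
/-!
Eliminating the momenta: differentiating `ẋ = p_y + (ε/2) x` once more and substituting the
equation for `ṗ_y`, then `p_y = ẋ - (ε/2) x`, leaves a second-order equation in `x` alone;
symmetrically for `y` with `pₓ`.
-/

section FirstOrderLinear

variable {𝕜 E : Type*} [NontriviallyNormedField 𝕜] [NormedAddCommGroup E] [NormedSpace 𝕜 E]
  {f g : 𝕜 → E} {c : 𝕜}

theorem differentiable_deriv_of_deriv_eq_add_smul (hf : Differentiable 𝕜 f)
    (hg : Differentiable 𝕜 g) (h : ∀ t, deriv f t = g t + c • f t) :
    Differentiable 𝕜 (deriv f) := by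
  rw [funext h]
  exact hg.add (hf.const_smul c)

theorem deriv_deriv_of_deriv_eq_add_smul (hf : Differentiable 𝕜 f)
    (hg : Differentiable 𝕜 g) (h : ∀ t, deriv f t = g t + c • f t) (t : 𝕜) :
    deriv (deriv f) t = deriv g t + c • deriv f t := by
  calc deriv (deriv f) t = deriv (fun s => g s + c • f s) t := by rw [funext h]
    _ = deriv g t + c • deriv f t := by
      rw [deriv_fun_add (hg t) (by fun_prop), deriv_fun_const_smul c (hf t)]

end FirstOrderLinear

theorem equivalent_linearization_hamilton_equations
    (ε α A ω : ℝ) (x y px py : ℝ → ℝ)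
    (hx : Differentiable ℝ x) (hy : Differentiable ℝ y)
    (hpx : Differentiable ℝ px) (hpy : Differentiable ℝ py)
    (h1 : ∀ t : ℝ, deriv x t = py t + ε / 2 * x t)
    (h2 : ∀ t : ℝ, deriv y t = px t - ε / 2 * (1 - α * A ^ 2 / 2) * y t)
    (h3 : ∀ t : ℝ, deriv px t = -(ε / 2) * px t - (ω ^ 2 - ε ^ 2 / 4) * y t)
    (h4 : ∀ t : ℝ, deriv py t = ε / 2 * (1 - α * A ^ 2 / 2) * py t
      - (ω ^ 2 - ε ^ 2 / 4) * x t) :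
    (Differentiable ℝ (deriv x) ∧ Differentiable ℝ (deriv y)) ∧
    (∀ t : ℝ, deriv (deriv x) t + ε * (α * A ^ 2 / 4 - 1) * deriv x t
      + (ω ^ 2 - ε ^ 2 * α * A ^ 2 / 8) * x t = 0) ∧
    (∀ t : ℝ, deriv (deriv y) t - ε * (α * A ^ 2 / 4 - 1) * deriv y t
      + (ω ^ 2 - ε ^ 2 * α * A ^ 2 / 8) * y t = 0) := by
  have hx' : ∀ t, deriv x t = py t + (ε / 2) • x t := h1
  have hy' : ∀ t, deriv y t = px t + (-(ε / 2 * (1 - α * A ^ 2 / 2))) • y t := fun t => by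
    rw [h2, smul_eq_mul]; ring
  refine ⟨⟨differentiable_deriv_of_deriv_eq_add_smul hx hpy hx',
    differentiable_deriv_of_deriv_eq_add_smul hy hpx hy'⟩, fun t => ?_, fun t => ?_⟩
  · rw [deriv_deriv_of_deriv_eq_add_smul hx hpy hx' t, smul_eq_mul, h4]
    linear_combination (-(ε / 2 * (1 - α * A ^ 2 / 2))) * h1 t
  · rw [deriv_deriv_of_deriv_eq_add_smul hy hpx hy' t, smul_eq_mul, h3]
    linear_combination (ε / 2) * h2 t
end

section
/- Let ε, α, ω, F₁, F₂, γ, Ω ∈ ℝ and let x, y, pₓ, p_y : ℝ → ℝ be differentiable functions satisfying, for all t ∈ ℝ: ẋ = p_y + (ε/2)x − (αε/6)x³, ẏ = pₓ − (ε/2)y + (αε/2)x²y, ṗₓ = −(ε/2)pₓ − (ω² − ε²/4)y − (αε/2)(2xy·p_y − x²pₓ) − (αε²/12)(12x²y − 5αx⁴y) + F₂cos(Ωt) − y·F₁cos(γt), ṗ_y = (ε/2)p_y − (ω² − ε²/4)x − (αε/2)x²p_y − (αε²/12)(4x³ − αx⁵) + F₂cos(Ωt) − x·F₁cos(γt). Then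 x and y are twice differentiable and satisfy ẍ + ε(αx² − 1)ẋ + (ω² + F₁cos(γt))x = F₂cos(Ωt) and ÿ − ε(αx² − 1)ẏ + (ω² + F₁cos(γt))y = F₂cos(Ωt) for all t ∈ ℝ. -/
theorem forced_vdp_hamilton_equations
    (ε α ω F₁ F₂ γ Ω : ℝ) (x y px py : ℝ → ℝ)
    (hx : Differentiable ℝ x) (hy : Differentiable ℝ y)
    (hpx : Differentiable ℝ px) (hpy : Differentiable ℝ py)
    (h1 : ∀ t : ℝ, deriv x t = py t + ε / 2 * x t - α * ε / 6 * (x t) ^ 3)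
    (h2 : ∀ t : ℝ, deriv y t = px t - ε / 2 * y t + α * ε / 2 * (x t) ^ 2 * y t)
    (h3 : ∀ t : ℝ, deriv px t = -(ε / 2) * px t - (ω ^ 2 - ε ^ 2 / 4) * y t
      - α * ε / 2 * (2 * x t * y t * py t - (x t) ^ 2 * px t)
      - α * ε ^ 2 / 12 * (12 * (x t) ^ 2 * y t - 5 * α * (x t) ^ 4 * y t)
      + F₂ * Real.cos (Ω * t) - y t * (F₁ * Real.cos (γ * t)))
    (h4 : ∀ t : ℝ, deriv py t = ε / 2 * py t - (ω ^ 2 - ε ^ 2 / 4) * x t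
      - α * ε / 2 * (x t) ^ 2 * py t
      - α * ε ^ 2 / 12 * (4 * (x t) ^ 3 - α * (x t) ^ 5)
      + F₂ * Real.cos (Ω * t) - x t * (F₁ * Real.cos (γ * t))) :
    (Differentiable ℝ (deriv x) ∧ Differentiable ℝ (deriv y)) ∧
    (∀ t : ℝ, deriv (deriv x) t + ε * (α * (x t) ^ 2 - 1) * deriv x t
      + (ω ^ 2 + F₁ * Real.cos (γ * t)) * x t = F₂ * Real.cos (Ω * t)) ∧
    (∀ t : ℝ, deriv (deriv y) t - ε * (α * (x t) ^ 2 - 1) * deriv y t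
      + (ω ^ 2 + F₁ * Real.cos (γ * t)) * y t = F₂ * Real.cos (Ω * t)) := by
  have hx' : deriv x = fun t => py t + ε / 2 * x t - α * ε / 6 * (x t) ^ 3 :=
    funext h1
  have hy' : deriv y = fun t => px t - ε / 2 * y t + α * ε / 2 * (x t) ^ 2 * y t :=
    funext h2
  have hdx : Differentiable ℝ (deriv x) := by
    rw [hx']; fun_prop
  have hdy : Differentiable ℝ (deriv y) := by
    rw [hy']; fun_prop
  refine ⟨⟨hdx, hdy⟩, ?_, ?_⟩
  · intro t
    have H : HasDerivAt (fun s => py s + ε / 2 * x s - α * ε / 6 * (x s) ^ 3)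
        (deriv py t + ε / 2 * deriv x t
          - α * ε / 6 * ((3 : ℕ) * (x t) ^ (3 - 1) * deriv x t)) t :=
      ((hpy t).hasDerivAt.add ((hx t).hasDerivAt.const_mul (ε / 2))).sub
        (((hx t).hasDerivAt.pow 3).const_mul (α * ε / 6))
    have hxx : deriv (deriv x) t = deriv py t + ε / 2 * deriv x t
        - α * ε / 6 * ((3 : ℕ) * (x t) ^ (3 - 1) * deriv x t) := by
      conv_lhs => rw [hx']
      exact H.deriv
    rw [hxx, h4 t, h1 t]; push_cast; ring
  · intro t
    have H : HasDerivAt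
        (fun s => px s - ε / 2 * y s + α * ε / 2 * ((x s) ^ 2 * y s))
        (deriv px t - ε / 2 * deriv y t
          + α * ε / 2 * ((2 : ℕ) * (x t) ^ (2 - 1) * deriv x t * y t
            + (x t) ^ 2 * deriv y t)) t :=
      ((hpx t).hasDerivAt.sub ((hy t).hasDerivAt.const_mul (ε / 2))).add
        ((((hx t).hasDerivAt.pow 2).mul (hy t).hasDerivAt).const_mul (α * ε / 2))
    have hfun : (fun t => px t - ε / 2 * y t + α * ε / 2 * (x t) ^ 2 * y t)
        = fun s => px s - ε / 2 * y s + α * ε / 2 * ((x s) ^ 2 * y s) := by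
      funext s; ring
    have hyy : deriv (deriv y) t = deriv px t - ε / 2 * deriv y t
        + α * ε / 2 * ((2 : ℕ) * (x t) ^ (2 - 1) * deriv x t * y t
          + (x t) ^ 2 * deriv y t) := by
      conv_lhs => rw [hy', hfun]
      exact H.deriv
    rw [hyy, h3 t, h1 t, h2 t]; push_cast; ring
end

section
/- Let ε, ω ∈ ℝ, let f₁ : ℝ → ℝ be differentiable, let f₂ : ℝ → ℝ be any function, and let x : ℝ → ℝ be twice differentiable. Then for all t ∈ ℝ: (d/dt)[ẋ(t) − (ε/2)x(t) + εf₁(x(t))] − [(ε/2)ẋ(t) − ω²x(t) − εf₂(x(t))ẋ(t)] = ẍ(t) + ε(f₁'(x(t)) + f₂(x(t)) − 1)ẋ(t) + ω²x(t). In particular, x satisfies this Euler–Lagrange equation (the left-hand side being zero) if and only if x satisfies the Liénard equation ẍ + εf(x)ẋ + ω²x = 0 with f = f₁' + f₂ − 1. -/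
theorem lienard_euler_lagrange_identity
    (ε ω : ℝ) (f₁ f₂ : ℝ → ℝ) (hf₁ : Differentiable ℝ f₁)
    (x : ℝ → ℝ) (hx : Differentiable ℝ x) (hx' : Differentiable ℝ (deriv x)) :
    (∀ t : ℝ,
      deriv (fun s => deriv x s - ε / 2 * x s + ε * f₁ (x s)) t
        - (ε / 2 * deriv x t - ω ^ 2 * x t - ε * f₂ (x t) * deriv x t)
      = deriv (deriv x) t
        + ε * (deriv f₁ (x t) + f₂ (x t) - 1) * deriv x t + ω ^ 2 * x t) ∧
    ((∀ t : ℝ,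
        deriv (fun s => deriv x s - ε / 2 * x s + ε * f₁ (x s)) t
          - (ε / 2 * deriv x t - ω ^ 2 * x t - ε * f₂ (x t) * deriv x t) = 0)
      ↔
      (∀ t : ℝ, deriv (deriv x) t
        + ε * (deriv f₁ (x t) + f₂ (x t) - 1) * deriv x t + ω ^ 2 * x t = 0)) := by
  have key : ∀ t : ℝ,
      deriv (fun s => deriv x s - ε / 2 * x s + ε * f₁ (x s)) t
        - (ε / 2 * deriv x t - ω ^ 2 * x t - ε * f₂ (x t) * deriv x t)
      = deriv (deriv x) t
        + ε * (deriv f₁ (x t) + f₂ (x t) - 1) * deriv x t + ω ^ 2 * x t := by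
    intro t
    have h1 : HasDerivAt x (deriv x t) t := (hx t).hasDerivAt
    have h2 : HasDerivAt (deriv x) (deriv (deriv x) t) t := (hx' t).hasDerivAt
    have h3 : HasDerivAt (fun s => f₁ (x s)) (deriv f₁ (x t) * deriv x t) t :=
      (hf₁ (x t)).hasDerivAt.comp t h1
    have h : HasDerivAt (fun s => deriv x s - ε / 2 * x s + ε * f₁ (x s))
        (deriv (deriv x) t - ε / 2 * deriv x t + ε * (deriv f₁ (x t) * deriv x t)) t :=
      (h2.sub (h1.const_mul (ε / 2))).add (h3.const_mul ε)
    rw [h.deriv]; ring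
  exact ⟨key, by constructor <;> intro h t <;> have := h t <;> rw [key t] at * <;> linarith [key t]⟩
end
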